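/- arXiv:2212.05930 — 7 statements merged into one kernel-verified Lean document; each statement's English description precedes it below -/
import Mathlib

section
/- For real numbers a, b and exponent γ > 1, one has |a-b|^{γ-2}(a-b)(a⁺ - b⁺) ≥ |a⁺ - b⁺|^γ, where a⁺ = max{a,0}. -/
/-- Lemma 2.2(i), first inequality: for `γ > 1`,
`|a-b|^(γ-2)(a-b)(a⁺ - b⁺) ≥ |a⁺ - b⁺|^γ` where `a⁺ = max a 0`. -/
theorem signed_power_pos_part_ineq (a b γ : ℝ) (hγ : 1 < γ) :
    |max a 0 - max b 0| ^ γ ≤ |a - b| ^ (γ - 2) * (a - b) * (max a 0 - max b 0) := by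
  set s := a - b with hs
  set t := max a 0 - max b 0 with ht
  have habs : |t| ≤ |s| := abs_max_sub_max_le_abs a b 0
  have hst : 0 ≤ s * t := by
    rcases le_total a b with h | h
    · have h1 : s ≤ 0 := sub_nonpos.mpr h
      have h2 : t ≤ 0 := sub_nonpos.mpr (max_le_max h le_rfl)
      nlinarith
    · have h1 : 0 ≤ s := sub_nonneg.mpr h
      have h2 : 0 ≤ t := sub_nonneg.mpr (max_le_max h le_rfl)
      exact mul_nonneg h1 h2
  rcases eq_or_ne t 0 with ht0 | ht0
  · rw [ht0]
    rw [abs_zero, Real.zero_rpow (by linarith : γ ≠ 0)]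
    simp
  · have hs0 : s ≠ 0 := by
      intro h
      apply ht0
      have : a = b := by linarith [hs ▸ h]
      simp [ht, this]
    have hsp : 0 < |s| := abs_pos.mpr hs0
    have htp : 0 < |t| := abs_pos.mpr ht0
    have key : s * t = |s| * |t| := by
      rw [← abs_mul, abs_of_nonneg hst]
    have : |s| ^ (γ - 2) * s * t = |s| ^ (γ - 1) * |t| := by
      rw [mul_assoc, key, ← mul_assoc, ← Real.rpow_add_one (ne_of_gt hsp)]
      ring_nf
    rw [this]
    have h1 : |t| ^ γ = |t| ^ (γ - 1) * |t| := by
      rw [← Real.rpow_add_one (ne_of_gt htp)]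
      ring_nf
    rw [h1]
    apply mul_le_mul_of_nonneg_right _ (abs_nonneg t)
    exact Real.rpow_le_rpow (abs_nonneg t) habs (by linarith)
end

section
/- For real numbers a, b and exponent γ > 1, one has |a-b|^{γ-2}(a-b)(b⁻ - a⁻) ≥ |a⁻ - b⁻|^γ, where a⁻ = max{-a,0}. -/
/-- Lemma 2.2(i), second inequality: for `γ > 1`,
`|a-b|^(γ-2)(a-b)(b⁻ - a⁻) ≥ |a⁻ - b⁻|^γ` where `a⁻ = max (-a) 0`. -/
theorem signed_power_neg_part_ineq (a b γ : ℝ) (hγ : 1 < γ) :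
    |max (-a) 0 - max (-b) 0| ^ γ ≤
      |a - b| ^ (γ - 2) * (a - b) * (max (-b) 0 - max (-a) 0) := by
  set e := |max (-a) 0 - max (-b) 0| with he
  set d := |a - b| with hd
  have hLip : e ≤ d := by
    have h := abs_max_sub_max_le_abs (-a) (-b) 0
    rwa [neg_sub_neg, abs_sub_comm b a] at h
  have hprod : (a - b) * (max (-b) 0 - max (-a) 0) = d * e := by
    rw [he, hd]
    rcases le_total a b with h | h
    · have h' : max (-b) 0 ≤ max (-a) 0 := max_le_max (by linarith) le_rfl
      rw [abs_of_nonpos (by linarith), abs_of_nonneg (by linarith)]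
      ring
    · have h' : max (-a) 0 ≤ max (-b) 0 := max_le_max (by linarith) le_rfl
      rw [abs_of_nonneg (by linarith), abs_of_nonpos (by linarith)]
      ring
  have he0 : 0 ≤ e := abs_nonneg _
  have hd0 : 0 ≤ d := abs_nonneg _
  rcases eq_or_lt_of_le hd0 with hdz | hdpos
  · have hez : e = 0 := le_antisymm (hdz ▸ hLip) he0
    have hab : a - b = 0 := abs_eq_zero.mp hdz.symm
    rw [hez, hab, Real.zero_rpow (by linarith)]
    simp
  · rw [mul_assoc, hprod, ← mul_assoc]
    have hkey : d ^ (γ - 2) * d = d ^ (γ - 1) := by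
      have h := Real.rpow_add hdpos (γ - 2) 1
      rw [Real.rpow_one] at h
      rw [← h]
      congr 1
      ring
    rw [hkey]
    have hesp : e ^ γ = e ^ (γ - 1) * e := by
      have h := Real.rpow_add' he0 (y := γ - 1) (z := 1) (by linarith)
      rw [Real.rpow_one] at h
      rw [← h]
      congr 1
      ring
    rw [hesp]
    exact mul_le_mul_of_nonneg_right
      (Real.rpow_le_rpow he0 hLip (by linarith)) he0
end

section
/- Discrete Picone inequality: let 1 < r₂ ≤ r₁ < ∞ and let f, g be real-valued with f(x), f(y) > 0 and g(x), g(y) ≥ 0. Then |f(x)-f(y)|^{r₁-2}(f(x)-f(y)) · (g(x)^{r₂}/f(x)^{r₂-1} - g(y)^{r₂}/f(y)^{r₂-1}) ≤ |g(x)-g(y)|^{r₂} |f(x)-f(y)|^{r₁-r₂}. -/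
/-!
Write `p = r₂`, `u = c / a` and `v = d / b`, so that `c ^ p / a ^ (p - 1) = u ^ p a` and
`d ^ p / b ^ (p - 1) = v ^ p b`. The tangent-line inequality `y ^ p ≥ x ^ p + p x ^ (p - 1) (y - x)`
of the convex function `y ↦ y ^ p` on `[0, ∞)` is applied twice. At `x = u`, `y = v`, scaled by `b`,
it bounds `u ^ p a - v ^ p b` by `p u ^ (p - 1) (c - d) - (p - 1) u ^ p (a - b)`. For `a > b`,
multiplying by `(a - b) ^ (p - 1)` turns this bound into `p t ^ (p - 1) (c - d) - (p - 1) t ^ p` with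
`t = u (a - b)`, and the tangent line at `x = t`, `y = |c - d|` bounds that by `|c - d| ^ p`.
The case `a < b` follows by symmetry, and the extra factor `|a - b| ^ (r₁ - r₂)` is nonnegative.
-/

namespace Real

lemma rpow_sub_one_mul_self {x : ℝ} (hx : 0 ≤ x) {p : ℝ} (hp : p ≠ 0) :
    x ^ (p - 1) * x = x ^ p := by
  simpa using (rpow_add_one' hx (y := p - 1) (by simpa using hp)).symm

lemma rpow_div_rpow_sub_one {a c : ℝ} (ha : 0 < a) (hc : 0 ≤ c) {p : ℝ} (hp : p ≠ 0) :
    c ^ p / a ^ (p - 1) = (c / a) ^ p * a := by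
  rw [div_rpow hc ha.le, ← rpow_sub_one_mul_self ha.le hp]
  field_simp

lemma mul_rpow_sub_one_mul_le {p x y : ℝ} (hp : 1 < p) (hx : 0 ≤ x) (hy : 0 ≤ y) :
    p * x ^ (p - 1) * y ≤ (p - 1) * x ^ p + y ^ p := by
  have hq := HolderConjugate.conjExponent hp
  have hyoung := young_inequality_of_nonneg (rpow_nonneg hx (p - 1)) hy hq.symm
  have hpow : (x ^ (p - 1)) ^ conjExponent p = x ^ p := by
    rw [← rpow_mul hx, conjExponent, mul_div_cancel₀ _ (sub_pos.2 hp).ne']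
  rw [hpow, conjExponent, div_div_eq_mul_div] at hyoung
  have hp0 : 0 < p := zero_lt_one.trans hp
  calc p * x ^ (p - 1) * y = p * (x ^ (p - 1) * y) := mul_assoc _ _ _
    _ ≤ p * (x ^ p * (p - 1) / p + y ^ p / p) := by gcongr
    _ = (p - 1) * x ^ p + y ^ p := by field_simp

lemma mul_rpow_sub_one_mul_sub_le_abs_rpow {p x : ℝ} (w : ℝ) (hp : 1 < p) (hx : 0 ≤ x) :
    p * x ^ (p - 1) * w - (p - 1) * x ^ p ≤ |w| ^ p := by
  have hp0 : 0 ≤ p := zero_le_one.trans hp.le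
  have : p * x ^ (p - 1) * w ≤ p * x ^ (p - 1) * |w| := by
    gcongr
    exact le_abs_self w
  linarith [mul_rpow_sub_one_mul_le hp hx (abs_nonneg w)]

end Real

open Real

lemma rpow_div_rpow_sub_one_sub_le {p a b c d : ℝ} (hp : 1 < p) (ha : 0 < a) (hb : 0 < b)
    (hc : 0 ≤ c) (hd : 0 ≤ d) :
    c ^ p / a ^ (p - 1) - d ^ p / b ^ (p - 1) ≤
      p * (c / a) ^ (p - 1) * (c - d) - (p - 1) * (c / a) ^ p * (a - b) := by
  have hp0 : p ≠ 0 := (zero_lt_one.trans hp).ne'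
  have hu : 0 ≤ c / a := div_nonneg hc ha.le
  have htangent := mul_le_mul_of_nonneg_right
    (mul_rpow_sub_one_mul_le hp hu (div_nonneg hd hb.le)) hb.le
  have hd_eq : d = d / b * b := (div_mul_cancel₀ d hb.ne').symm
  have hcu : (c / a) ^ (p - 1) * c = (c / a) ^ p * a := by
    rw [← rpow_sub_one_mul_self hu hp0, mul_assoc, div_mul_cancel₀ c ha.ne']
  rw [rpow_div_rpow_sub_one ha hc hp0, rpow_div_rpow_sub_one hb hd hp0]
  nth_rw 2 [hd_eq]
  linear_combination htangent - p * hcu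

lemma picone_of_lt {p a b c d : ℝ} (hp : 1 < p) (hba : b < a) (hb : 0 < b) (hc : 0 ≤ c)
    (hd : 0 ≤ d) :
    |a - b| ^ (p - 2) * (a - b) * (c ^ p / a ^ (p - 1) - d ^ p / b ^ (p - 1)) ≤ |c - d| ^ p := by
  have ha : 0 < a := hb.trans hba
  have hs : 0 < a - b := sub_pos.2 hba
  have hu : 0 ≤ c / a := div_nonneg hc ha.le
  have hsign : |a - b| ^ (p - 2) * (a - b) = (a - b) ^ (p - 1) := by
    rw [abs_of_pos hs, ← rpow_add_one hs.ne']
    ring_nf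
  have hscale : (a - b) ^ (p - 1) *
      (p * (c / a) ^ (p - 1) * (c - d) - (p - 1) * (c / a) ^ p * (a - b)) =
      p * (c / a * (a - b)) ^ (p - 1) * (c - d) - (p - 1) * (c / a * (a - b)) ^ p := by
    rw [mul_rpow hu hs.le, mul_rpow hu hs.le,
      ← rpow_sub_one_mul_self hs.le (zero_lt_one.trans hp).ne']
    ring
  calc |a - b| ^ (p - 2) * (a - b) * (c ^ p / a ^ (p - 1) - d ^ p / b ^ (p - 1))
      ≤ (a - b) ^ (p - 1) *
          (p * (c / a) ^ (p - 1) * (c - d) - (p - 1) * (c / a) ^ p * (a - b)) := by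
        rw [hsign]
        exact mul_le_mul_of_nonneg_left (rpow_div_rpow_sub_one_sub_le hp ha hb hc hd)
          (rpow_nonneg hs.le _)
    _ ≤ |c - d| ^ p := by
        rw [hscale]
        exact mul_rpow_sub_one_mul_sub_le_abs_rpow _ hp (mul_nonneg hu hs.le)

lemma picone {p a b c d : ℝ} (hp : 1 < p) (ha : 0 < a) (hb : 0 < b) (hc : 0 ≤ c) (hd : 0 ≤ d) :
    |a - b| ^ (p - 2) * (a - b) * (c ^ p / a ^ (p - 1) - d ^ p / b ^ (p - 1)) ≤ |c - d| ^ p := by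
  rcases lt_trichotomy a b with hab | rfl | hab
  · have hswap := picone_of_lt hp hab ha hd hc
    rw [abs_sub_comm b a, abs_sub_comm d c] at hswap
    linarith
  · simpa using rpow_nonneg (abs_nonneg (c - d)) p
  · exact picone_of_lt hp hab hb hc hd

theorem discrete_picone_one_general (r₁ r₂ a b c d : ℝ) (hr₂ : 1 < r₂)
    (ha : 0 < a) (hb : 0 < b) (hc : 0 ≤ c) (hd : 0 ≤ d) :
    |a - b| ^ (r₁ - 2) * (a - b) *
        (c ^ r₂ / a ^ (r₂ - 1) - d ^ r₂ / b ^ (r₂ - 1)) ≤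
      |c - d| ^ r₂ * |a - b| ^ (r₁ - r₂) := by
  rcases eq_or_ne a b with rfl | hab
  · simpa using mul_nonneg (rpow_nonneg (abs_nonneg (c - d)) r₂) (rpow_nonneg (abs_nonneg 0) _)
  have hsplit : |a - b| ^ (r₁ - 2) = |a - b| ^ (r₁ - r₂) * |a - b| ^ (r₂ - 2) := by
    rw [← rpow_add (abs_pos.2 (sub_ne_zero.2 hab))]
    ring_nf
  calc |a - b| ^ (r₁ - 2) * (a - b) * (c ^ r₂ / a ^ (r₂ - 1) - d ^ r₂ / b ^ (r₂ - 1))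
      = |a - b| ^ (r₁ - r₂) *
          (|a - b| ^ (r₂ - 2) * (a - b) * (c ^ r₂ / a ^ (r₂ - 1) - d ^ r₂ / b ^ (r₂ - 1))) := by
        rw [hsplit]; ring
    _ ≤ |a - b| ^ (r₁ - r₂) * |c - d| ^ r₂ := by
        gcongr
        exact picone hr₂ ha hb hc hd
    _ = |c - d| ^ r₂ * |a - b| ^ (r₁ - r₂) := mul_comm _ _

/-- Discrete Picone inequality (Lemma 2.3(i)): for `1 < r₂ ≤ r₁`, `a = f(x) > 0`,
`b = f(y) > 0`, `c = g(x) ≥ 0`, `d = g(y) ≥ 0`,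
`|a-b|^(r₁-2)(a-b)(c^{r₂}/a^{r₂-1} - d^{r₂}/b^{r₂-1}) ≤ |c-d|^{r₂} |a-b|^{r₁-r₂}`. -/
theorem discrete_picone_one (r₁ r₂ a b c d : ℝ) (hr₂ : 1 < r₂) (hr : r₂ ≤ r₁)
    (ha : 0 < a) (hb : 0 < b) (hc : 0 ≤ c) (hd : 0 ≤ d) :
    |a - b| ^ (r₁ - 2) * (a - b) *
        (c ^ r₂ / a ^ (r₂ - 1) - d ^ r₂ / b ^ (r₂ - 1)) ≤
      |c - d| ^ r₂ * |a - b| ^ (r₁ - r₂) :=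
  discrete_picone_one_general r₁ r₂ a b c d hr₂ ha hb hc hd
end

section
/- Discrete Picone inequality (second form): let 1 < r₂ ≤ r₁ < ∞ and let a, b > 0, c, d ≥ 0. Then |a-b|^{r₂-2}(a-b)·(c^{r₁}/a^{r₁-1} - d^{r₁}/b^{r₁-1}) ≤ |c-d|^{r₂-2}(c-d)·(c^{r₁-r₂+1}/a^{r₁-r₂} - d^{r₁-r₂+1}/b^{r₁-r₂}). -/
private lemma rpow_split {t e f : ℝ} (ht : 0 ≤ t) (he : e ≠ 0) (hef : e = f + 1) :
    t ^ e = t ^ f * t := by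
  subst hef
  rcases ht.eq_or_lt with rfl | h
  · rw [Real.zero_rpow he, mul_zero]
  · exact Real.rpow_add_one h.ne' f

private lemma rpow_add'' {x p r s : ℝ} (hx : 0 ≤ x) (hp : p ≠ 0) (h : p = r + s) :
    x ^ p = x ^ r * x ^ s := by
  subst h; exact Real.rpow_add' hx hp

private lemma spow_of_nonneg {q t : ℝ} (hq : 1 < q) (ht : 0 ≤ t) :
    |t| ^ (q - 2) * t = t ^ (q - 1) := by
  rcases ht.eq_or_lt with rfl | h
  · rw [mul_zero, Real.zero_rpow (ne_of_gt (by linarith))]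
  · rw [abs_of_pos h, ← Real.rpow_add_one h.ne' (q - 2)]
    congr 1; ring

private lemma tangent {q s t : ℝ} (hq : 1 < q) (hs : 0 ≤ s) (ht : 0 ≤ t) :
    s ^ q + q * s ^ (q - 1) * (t - s) ≤ t ^ q := by
  rcases hs.eq_or_lt with rfl | hs'
  · rw [Real.zero_rpow (ne_of_gt (by linarith) : q ≠ 0), Real.zero_rpow (ne_of_gt (by linarith) : q - 1 ≠ 0)]
    simpa using Real.rpow_nonneg ht q
  · have h1 : (-1 : ℝ) ≤ t / s - 1 := by
      have : 0 ≤ t / s := div_nonneg ht hs'.le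
      linarith
    have hb := one_add_mul_self_le_rpow_one_add h1 hq.le
    rw [show (1 : ℝ) + (t / s - 1) = t / s by ring] at hb
    have hsq : (0 : ℝ) < s ^ q := Real.rpow_pos_of_pos hs' q
    have key := mul_le_mul_of_nonneg_left hb hsq.le
    have e1 : s ^ q * (t / s) ^ q = t ^ q := by
      rw [Real.div_rpow ht hs'.le]
      field_simp
    have e2 : s ^ q * (1 + q * (t / s - 1)) = s ^ q + q * s ^ (q - 1) * (t - s) := by
      rw [Real.rpow_sub_one hs'.ne' q]
      field_simp
    rw [e1, e2] at key
    exact key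

private lemma core {q a b x y : ℝ} (hq : 1 < q) (hb : 0 < b) (hab : b ≤ a)
    (hx : 0 ≤ x) (hy : 0 ≤ y) (hxy : y * b ≤ x * a) :
    (a - b) ^ (q - 1) * (x ^ q * a - y ^ q * b) ≤ (x * a - y * b) ^ q := by
  have hab0 : (0:ℝ) ≤ a - b := by linarith
  have hs1 : 0 ≤ (a - b) * x := mul_nonneg hab0 hx
  have ht1 : 0 ≤ x * a - y * b := sub_nonneg.2 hxy
  have T1 := tangent hq hs1 ht1
  have T2 := tangent hq hx hy
  have hK : 0 ≤ (a - b) ^ (q - 1) := Real.rpow_nonneg hab0 _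
  have hE1 : ((a - b) * x) ^ q = (a - b) ^ q * x ^ q := Real.mul_rpow hab0 hx
  have hE2 : ((a - b) * x) ^ (q - 1) = (a - b) ^ (q - 1) * x ^ (q - 1) := Real.mul_rpow hab0 hx
  have hE3 : (a - b) ^ q = (a - b) ^ (q - 1) * (a - b) :=
    rpow_split hab0 (ne_of_gt (by linarith)) (by ring)
  rw [hE1, hE2, hE3] at T1
  have hT2b : 0 ≤ (a - b) ^ (q - 1) * b * (y ^ q - (x ^ q + q * x ^ (q - 1) * (y - x))) :=
    mul_nonneg (mul_nonneg hK hb.le) (by linarith)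
  nlinarith [T1, hT2b]

set_option maxHeartbeats 1000000 in
private lemma star {q p a b x y : ℝ} (hq : 1 < q) (hp : q ≤ p) (hb : 0 < b) (hab : b ≤ a)
    (hx : 0 ≤ x) (hy : 0 ≤ y) :
    |a - b| ^ (q - 2) * (a - b) * (x ^ p * a - y ^ p * b) ≤
      |x * a - y * b| ^ (q - 2) * (x * a - y * b) * (x ^ (p - q + 1) * a - y ^ (p - q + 1) * b) := by
  have ha : (0:ℝ) < a := lt_of_lt_of_le hb hab
  have hab0 : (0:ℝ) ≤ a - b := by linarith
  have hK : 0 ≤ (a - b) ^ (q - 1) := Real.rpow_nonneg hab0 _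
  rw [spow_of_nonneg hq hab0]
  rcases le_or_gt (y * b) (x * a) with hxy | hxy
  · -- main case : x*a ≥ y*b
    have hS0 : 0 ≤ x * a - y * b := sub_nonneg.2 hxy
    rw [spow_of_nonneg hq hS0]
    have eX : x ^ p = x ^ (q - 1) * x ^ (p - q + 1) :=
      rpow_add'' hx (ne_of_gt (by linarith)) (by ring)
    have eY : y ^ p = y ^ (q - 1) * y ^ (p - q + 1) :=
      rpow_add'' hy (ne_of_gt (by linarith)) (by ring)
    rw [eX, eY]
    have eS : (x * a - y * b) ^ q = (x * a - y * b) ^ (q - 1) * (x * a - y * b) :=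
      rpow_split hS0 (ne_of_gt (by linarith)) (by ring)
    have exq : x ^ q = x ^ (q - 1) * x := rpow_split hx (ne_of_gt (by linarith)) (by ring)
    have eyq : y ^ q = y ^ (q - 1) * y := rpow_split hy (ne_of_gt (by linarith)) (by ring)
    have ex : x ^ (p - q + 1) = x ^ (p - q) * x :=
      rpow_split hx (ne_of_gt (by linarith)) (by ring)
    have ey : y ^ (p - q + 1) = y ^ (p - q) * y :=
      rpow_split hy (ne_of_gt (by linarith)) (by ring)
    have coremul : 0 ≤ y ^ (p - q) *
        ((x * a - y * b) ^ q - (a - b) ^ (q - 1) * (x ^ q * a - y ^ q * b)) :=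
      mul_nonneg (Real.rpow_nonneg hy _) (sub_nonneg.2 (core hq hb hab hx hy hxy))
    have sigma : 0 ≤ ((x * a - y * b) ^ (q - 1) - (a - b) ^ (q - 1) * x ^ (q - 1)) *
        (x ^ (p - q + 1) * a - x * y ^ (p - q) * a) := by
      rcases le_total y x with hyx | hxy2
      · have h1 : x * (a - b) ≤ x * a - y * b := by nlinarith
        have h2 : (x * (a - b)) ^ (q - 1) ≤ (x * a - y * b) ^ (q - 1) :=
          Real.rpow_le_rpow (mul_nonneg hx hab0) h1 (by linarith)
        have h3 : (x * (a - b)) ^ (q - 1) = x ^ (q - 1) * (a - b) ^ (q - 1) :=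
          Real.mul_rpow hx hab0
        have h5 : y ^ (p - q) ≤ x ^ (p - q) := Real.rpow_le_rpow hy hyx (by linarith)
        have h6 : x * y ^ (p - q) * a ≤ x ^ (p - q + 1) * a := by
          rw [ex]; nlinarith [mul_le_mul_of_nonneg_left h5 hx]
        apply mul_nonneg (by rw [h3] at h2; linarith) (by linarith)
      · have h1 : x * a - y * b ≤ x * (a - b) := by nlinarith
        have h2 : (x * a - y * b) ^ (q - 1) ≤ (x * (a - b)) ^ (q - 1) :=
          Real.rpow_le_rpow hS0 h1 (by linarith)
        have h3 : (x * (a - b)) ^ (q - 1) = x ^ (q - 1) * (a - b) ^ (q - 1) :=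
          Real.mul_rpow hx hab0
        have h5 : x ^ (p - q) ≤ y ^ (p - q) := Real.rpow_le_rpow hx hxy2 (by linarith)
        have h6 : x ^ (p - q + 1) * a ≤ x * y ^ (p - q) * a := by
          rw [ex]; nlinarith [mul_le_mul_of_nonneg_left h5 hx]
        have g1 : (x * a - y * b) ^ (q - 1) - (a - b) ^ (q - 1) * x ^ (q - 1) ≤ 0 := by
          rw [h3] at h2; linarith
        nlinarith [mul_nonneg (neg_nonneg.2 g1) (by linarith : 0 ≤ x * y ^ (p - q) * a - x ^ (p - q + 1) * a)]
    have key2 : (x * a - y * b) ^ (q - 1) * (x ^ (p - q + 1) * a - y ^ (p - q + 1) * b)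
        - (a - b) ^ (q - 1) * (x ^ (q - 1) * x ^ (p - q + 1) * a - y ^ (q - 1) * y ^ (p - q + 1) * b)
        = ((x * a - y * b) ^ (q - 1) - (a - b) ^ (q - 1) * x ^ (q - 1)) *
            (x ^ (p - q + 1) * a - x * y ^ (p - q) * a)
          + y ^ (p - q) *
            ((x * a - y * b) ^ q - (a - b) ^ (q - 1) * (x ^ q * a - y ^ q * b)) := by
      rw [eS, exq, eyq, ex, ey]; ring
    linarith [sigma, coremul, key2]
  · -- case III : x*a < y*b
    have hy0 : 0 < y := by
      rcases hy.eq_or_lt with rfl | h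
      · exfalso; nlinarith [mul_nonneg hx ha.le]
      · exact h
    have hxylt : x < y := by nlinarith
    have hA : x ^ (p - q + 1) * a ≤ y ^ (p - q + 1) * b := by
      rw [rpow_split hx (ne_of_gt (by linarith : (0:ℝ) < p - q + 1)) (by ring : p - q + 1 = (p - q) + 1),
          rpow_split hy (ne_of_gt (by linarith : (0:ℝ) < p - q + 1)) (by ring : p - q + 1 = (p - q) + 1)]
      have h5 : x ^ (p - q) ≤ y ^ (p - q) := Real.rpow_le_rpow hx hxylt.le (by linarith)
      calc x ^ (p - q) * x * a = x ^ (p - q) * (x * a) := by ring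
        _ ≤ y ^ (p - q) * (y * b) :=
          mul_le_mul h5 hxy.le (mul_nonneg hx ha.le) (Real.rpow_nonneg hy _)
        _ = y ^ (p - q) * y * b := by ring
    have hB : x ^ p * a ≤ y ^ p * b := by
      rw [rpow_split hx (ne_of_gt (by linarith : (0:ℝ) < p)) (by ring : p = (p - 1) + 1),
          rpow_split hy (ne_of_gt (by linarith : (0:ℝ) < p)) (by ring : p = (p - 1) + 1)]
      have h5 : x ^ (p - 1) ≤ y ^ (p - 1) := Real.rpow_le_rpow hx hxylt.le (by linarith)
      calc x ^ (p - 1) * x * a = x ^ (p - 1) * (x * a) := by ring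
        _ ≤ y ^ (p - 1) * (y * b) :=
          mul_le_mul h5 hxy.le (mul_nonneg hx ha.le) (Real.rpow_nonneg hy _)
        _ = y ^ (p - 1) * y * b := by ring
    have hL : (a - b) ^ (q - 1) * (x ^ p * a - y ^ p * b) ≤ 0 :=
      mul_nonpos_of_nonneg_of_nonpos hK (by linarith)
    have hR : 0 ≤ |x * a - y * b| ^ (q - 2) * (x * a - y * b) *
        (x ^ (p - q + 1) * a - y ^ (p - q + 1) * b) := by
      have t1 : 0 ≤ |x * a - y * b| ^ (q - 2) := Real.rpow_nonneg (abs_nonneg _) _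
      have t2 : |x * a - y * b| ^ (q - 2) * (x * a - y * b) ≤ 0 :=
        mul_nonpos_of_nonneg_of_nonpos t1 (by linarith)
      have t3 := mul_nonneg (neg_nonneg.2 t2)
        (by linarith : 0 ≤ -(x ^ (p - q + 1) * a - y ^ (p - q + 1) * b))
      nlinarith [t3]
    linarith

private lemma conv {a c p s : ℝ} (ha : 0 < a) (hc : 0 ≤ c) (hs : s = p - 1) :
    (c / a) ^ p * a = c ^ p / a ^ s := by
  subst hs
  rw [Real.div_rpow hc ha.le, Real.rpow_sub_one ha.ne']
  have h := (Real.rpow_pos_of_pos ha p).ne'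
  field_simp

/-- Discrete Picone inequality (Lemma 2.3(ii)): for `1 < r₂ ≤ r₁`, `a, b > 0`, `c, d ≥ 0`,
`|a-b|^(r₂-2)(a-b)(c^{r₁}/a^{r₁-1} - d^{r₁}/b^{r₁-1})
  ≤ |c-d|^(r₂-2)(c-d)(c^{r₁-r₂+1}/a^{r₁-r₂} - d^{r₁-r₂+1}/b^{r₁-r₂})`. -/
theorem discrete_picone_two (r₁ r₂ a b c d : ℝ) (hr₂ : 1 < r₂) (hr : r₂ ≤ r₁)
    (ha : 0 < a) (hb : 0 < b) (hc : 0 ≤ c) (hd : 0 ≤ d) :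
    |a - b| ^ (r₂ - 2) * (a - b) *
        (c ^ r₁ / a ^ (r₁ - 1) - d ^ r₁ / b ^ (r₁ - 1)) ≤
      |c - d| ^ (r₂ - 2) * (c - d) *
        (c ^ (r₁ - r₂ + 1) / a ^ (r₁ - r₂) - d ^ (r₁ - r₂ + 1) / b ^ (r₁ - r₂)) := by
  rcases le_total b a with hab | hab
  · have H := star hr₂ hr hb hab (div_nonneg hc ha.le) (div_nonneg hd hb.le)
    rw [conv (s := r₁-1) ha hc rfl, conv (s := r₁-1) hb hd rfl, conv (s := r₁-r₂) ha hc (by ring), conv (s := r₁-r₂) hb hd (by ring),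
      div_mul_cancel₀ c ha.ne', div_mul_cancel₀ d hb.ne'] at H
    exact H
  · have H := star hr₂ hr ha hab (div_nonneg hd hb.le) (div_nonneg hc ha.le)
    rw [conv (s := r₁-1) hb hd rfl, conv (s := r₁-1) ha hc rfl, conv (s := r₁-r₂) hb hd (by ring), conv (s := r₁-r₂) ha hc (by ring),
      div_mul_cancel₀ d hb.ne', div_mul_cancel₀ c ha.ne',
      abs_sub_comm b a, abs_sub_comm d c] at H
    nlinarith [H]
end

section
/- Let 0 < s < 1, 1 < r₂ < r₁ < ∞, Ω bounded open, u ∈ W₀^{s,r₁}(Ω) nonnegative, v ∈ W₀^{s,r₁}(Ω) ∩ L^∞(Ω), and k ∈ ℕ with u_k := u + 1/k. Then the function φ_k := |v|^{r₁}/(u_k^{r₁-1} + u_k^{r₂-1}) belongs to W₀^{s,r₁}(Ω); in particular there is a constant C = C(r₁, r₂, k, ‖v‖_∞) such that |φ_k(x) - φ_k(y)| ≤ C(|v(x)-v(y)| + |u(x)-u(y)|) for all x, y ∈ ℝ^d. -/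
open MeasureTheory Real ENNReal

noncomputable section

abbrev Rd (d : ℕ) := EuclideanSpace ℝ (Fin d)

/-- Gagliardo energy `∬ |u(x)-u(y)|^r / |x-y|^{d+sr} dx dy` as an `ℝ≥0∞`-valued integral. -/
def gEnergy (d : ℕ) (s r : ℝ) (u : Rd d → ℝ) : ℝ≥0∞ :=
  ∫⁻ x : Rd d, ∫⁻ y : Rd d,
    ENNReal.ofReal (|u x - u y| ^ r / ‖x - y‖ ^ ((d : ℝ) + s * r))

/-- Gagliardo seminorm `[u]_{s,r}`. -/
def gSemi (d : ℕ) (s r : ℝ) (u : Rd d → ℝ) : ℝ :=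
  (gEnergy d s r u).toReal ^ (1 / r)

/-- Membership in `W₀^{s,r}(Ω)`: `u ∈ L^r`, finite Gagliardo energy, `u = 0` outside `Ω`. -/
def memW0 (d : ℕ) (Ω : Set (Rd d)) (s r : ℝ) (u : Rd d → ℝ) : Prop :=
  MemLp u (ENNReal.ofReal r) volume ∧ gEnergy d s r u ≠ ⊤ ∧ ∀ x ∉ Ω, u x = 0

/-- The nonlocal energy form `⟨A_r(u), φ⟩` of the fractional `r`-Laplacian `(-Δ)^s_r`. -/
def formA (d : ℕ) (s r : ℝ) (u φ : Rd d → ℝ) : ℝ :=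
  ∫ x : Rd d, ∫ y : Rd d,
    |u x - u y| ^ (r - 2) * (u x - u y) * (φ x - φ y) / ‖x - y‖ ^ ((d : ℝ) + s * r)

/-- `u` is a weak solution of `(EV; α, β)`:
`(-Δ)^{s₁}_p u + (-Δ)^{s₂}_q u = α|u|^{p-2}u + β|u|^{q-2}u` in `Ω`, `u = 0` outside `Ω`. -/
def isWeakSol (d : ℕ) (Ω : Set (Rd d)) (s₁ s₂ p q α β : ℝ) (u : Rd d → ℝ) : Prop :=
  memW0 d Ω s₁ p u ∧ ∀ φ : Rd d → ℝ, memW0 d Ω s₁ p φ →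
    formA d s₁ p u φ + formA d s₂ q u φ =
      α * ∫ x in Ω, |u x| ^ (p - 2) * u x * φ x +
        β * ∫ x in Ω, |u x| ^ (q - 2) * u x * φ x

/-- The first Dirichlet eigenvalue `λ¹_{s,r}(Ω)` via the Rayleigh quotient. -/
def lam1 (d : ℕ) (Ω : Set (Rd d)) (s r : ℝ) : ℝ :=
  sInf {t : ℝ | ∃ u : Rd d → ℝ, memW0 d Ω s r u ∧
    (∫ x in Ω, |u x| ^ r) = 1 ∧ t = gSemi d s r u ^ r}

/-- The energy functional `I₊`. -/
def Iplus (d : ℕ) (Ω : Set (Rd d)) (s₁ s₂ p q α β : ℝ) (u : Rd d → ℝ) : ℝ :=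
  gSemi d s₁ p u ^ p / p + gSemi d s₂ q u ^ q / q
    - α * (∫ x in Ω, max (u x) 0 ^ p) / p - β * (∫ x in Ω, max (u x) 0 ^ q) / q

/-!
On `[-M, M] × [ε, ∞)` the map `(a, t) ↦ |a|^γ / (t^p + t^q)` is Lipschitz: the derivative of
`|a|^γ` is at most `γ M^(γ-1)`, and that of `t ↦ (t^p + t^q)⁻¹` at most `(p+q) / (ε (ε^p + ε^q))`,
because `t (t^p + t^q)' ≤ (p+q) (t^p + t^q)`. As `u_k ≥ 1/k`, this is the pointwise bound for
`φ_k`. Raising it to the power `r₁ ≥ 1` and integrating against the Gagliardo kernel bounds the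
energy of `φ_k` by those of `u` and `v`; and `φ_k` is bounded and vanishes off the bounded set `Ω`,
so it lies in every `L^p`.
-/
section Pointwise

theorem abs_rpow_sub_rpow_le {γ M a b : ℝ} (hγ : 1 ≤ γ) (ha : 0 ≤ a) (hb : 0 ≤ b)
    (haM : a ≤ M) (hbM : b ≤ M) : |a ^ γ - b ^ γ| ≤ γ * M ^ (γ - 1) * |a - b| := by
  refine (convex_Icc 0 M).norm_image_sub_le_of_norm_hasDerivWithin_le
    (fun t _ => (hasDerivAt_rpow_const (Or.inr hγ)).hasDerivWithinAt) (fun t ht => ?_)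
    ⟨hb, hbM⟩ ⟨ha, haM⟩
  rw [norm_mul, Real.norm_of_nonneg (by linarith), Real.norm_of_nonneg (rpow_nonneg ht.1 _)]
  gcongr
  exacts [ht.1, ht.2]

variable {p q ε : ℝ}

theorem abs_deriv_inv_rpow_add_rpow_le (hp : 0 ≤ p) (hq : 0 ≤ q) (hε : 0 < ε) {t : ℝ}
    (ht : ε ≤ t) :
    |-(p * t ^ (p - 1) + q * t ^ (q - 1)) / (t ^ p + t ^ q) ^ 2| ≤
      (p + q) / (ε * (ε ^ p + ε ^ q)) := by
  have ht0 : 0 < t := hε.trans_le ht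
  have hh : 0 < t ^ p + t ^ q := by positivity
  calc |-(p * t ^ (p - 1) + q * t ^ (q - 1)) / (t ^ p + t ^ q) ^ 2|
      = (p * t ^ p + q * t ^ q) / (t * (t ^ p + t ^ q) ^ 2) := by
        rw [rpow_sub_one ht0.ne', rpow_sub_one ht0.ne', abs_div, abs_neg,
          abs_of_nonneg (by positivity), abs_of_nonneg (by positivity)]
        field_simp
    _ ≤ (p + q) * (t ^ p + t ^ q) / (t * (t ^ p + t ^ q) ^ 2) := by
        gcongr
        nlinarith [mul_nonneg hp (rpow_nonneg ht0.le q), mul_nonneg hq (rpow_nonneg ht0.le p)]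
    _ = (p + q) / (t * (t ^ p + t ^ q)) := by field_simp
    _ ≤ (p + q) / (ε * (ε ^ p + ε ^ q)) := by gcongr

theorem abs_inv_rpow_add_rpow_sub_le (hp : 0 ≤ p) (hq : 0 ≤ q) (hε : 0 < ε) {a b : ℝ}
    (ha : ε ≤ a) (hb : ε ≤ b) :
    |(a ^ p + a ^ q)⁻¹ - (b ^ p + b ^ q)⁻¹| ≤ (p + q) / (ε * (ε ^ p + ε ^ q)) * |a - b| := by
  refine (convex_Ici ε).norm_image_sub_le_of_norm_hasDerivWithin_le
    (f := fun t => (t ^ p + t ^ q)⁻¹) (fun t ht => ?_)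
    (fun t ht => abs_deriv_inv_rpow_add_rpow_le hp hq hε ht) hb ha
  have ht0 : 0 < t := hε.trans_le ht
  have hh : t ^ p + t ^ q ≠ 0 := by positivity
  exact (((hasDerivAt_rpow_const (Or.inl ht0.ne')).add
    (hasDerivAt_rpow_const (Or.inl ht0.ne'))).inv hh).hasDerivWithinAt

theorem exists_abs_rpow_div_rpow_add_rpow_sub_le {γ M : ℝ} (hγ : 1 ≤ γ) (hp : 0 ≤ p)
    (hq : 0 ≤ q) (hε : 0 < ε) (hM : 0 ≤ M) :
    ∃ C, 0 < C ∧ ∀ a b t t' : ℝ, |a| ≤ M → |b| ≤ M → ε ≤ t → ε ≤ t' →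
      |(|a| ^ γ / (t ^ p + t ^ q)) - |b| ^ γ / (t' ^ p + t' ^ q)| ≤
        C * (|a - b| + |t - t'|) := by
  set L := (p + q) / (ε * (ε ^ p + ε ^ q))
  set A := γ * M ^ (γ - 1) * (ε ^ p + ε ^ q)⁻¹
  have hL : 0 ≤ L := by positivity
  have hγ0 : 0 ≤ γ := by linarith
  have hA : 0 ≤ A := by positivity
  refine ⟨A + M ^ γ * L + 1, by positivity, fun a b t t' ha hb ht ht' => ?_⟩
  have ht'0 : 0 < t' := hε.trans_le ht'
  simp only [div_eq_mul_inv]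
  calc |(|a| ^ γ * (t ^ p + t ^ q)⁻¹) - |b| ^ γ * (t' ^ p + t' ^ q)⁻¹|
      = |(|a| ^ γ * ((t ^ p + t ^ q)⁻¹ - (t' ^ p + t' ^ q)⁻¹)
          + (|a| ^ γ - |b| ^ γ) * (t' ^ p + t' ^ q)⁻¹)| := by ring_nf
    _ ≤ |a| ^ γ * |(t ^ p + t ^ q)⁻¹ - (t' ^ p + t' ^ q)⁻¹|
          + |(|a| ^ γ - |b| ^ γ)| * (t' ^ p + t' ^ q)⁻¹ := by
        refine (abs_add_le _ _).trans_eq ?_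
        rw [abs_mul, abs_mul, abs_of_nonneg (rpow_nonneg (abs_nonneg a) γ),
          abs_of_pos (by positivity : 0 < (t' ^ p + t' ^ q)⁻¹)]
    _ ≤ M ^ γ * (L * |t - t'|) + γ * M ^ (γ - 1) * |a - b| * (ε ^ p + ε ^ q)⁻¹ := by
        gcongr
        · exact abs_inv_rpow_add_rpow_sub_le hp hq hε ht ht'
        · exact (abs_rpow_sub_rpow_le hγ (abs_nonneg a) (abs_nonneg b) ha hb).trans
            (mul_le_mul_of_nonneg_left (abs_abs_sub_abs_le_abs_sub a b) (by positivity))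
    _ ≤ (A + M ^ γ * L + 1) * (|a - b| + |t - t'|) := by
        have hab := abs_nonneg (a - b)
        have htt := abs_nonneg (t - t')
        nlinarith [mul_nonneg hA htt, mul_nonneg (mul_nonneg (rpow_nonneg hM γ) hL) hab]

end Pointwise

section GagliardoEnergy

variable {d : ℕ} {s r : ℝ}

def gIntegrand (d : ℕ) (s r : ℝ) (u : Rd d → ℝ) (x y : Rd d) : ℝ≥0∞ :=
  ENNReal.ofReal (|u x - u y| ^ r / ‖x - y‖ ^ ((d : ℝ) + s * r))

theorem measurable_uncurry_gIntegrand {u : Rd d → ℝ} (hu : Measurable u) :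
    Measurable (Function.uncurry (gIntegrand d s r u)) :=
  ((((hu.comp measurable_fst).sub (hu.comp measurable_snd)).abs.pow_const _).div
    ((measurable_fst.sub measurable_snd).norm.pow_const _)).ennreal_ofReal

theorem gEnergy_congr {u v : Rd d → ℝ} (h : u =ᵐ[volume] v) :
    gEnergy d s r u = gEnergy d s r v := by
  refine lintegral_congr_ae ?_
  filter_upwards [h] with x hx
  refine lintegral_congr_ae ?_
  filter_upwards [h] with y hy
  rw [hx, hy]

theorem gIntegrand_le_of_abs_sub_le (hr : 1 ≤ r) {C : ℝ} (hC : 0 ≤ C) {u v φ : Rd d → ℝ}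
    {x y : Rd d} (h : |φ x - φ y| ≤ C * (|v x - v y| + |u x - u y|)) :
    gIntegrand d s r φ x y ≤ ENNReal.ofReal (C ^ r * 2 ^ (r - 1)) *
      (gIntegrand d s r v x y + gIntegrand d s r u x y) := by
  have hpow : |φ x - φ y| ^ r ≤ C ^ r * 2 ^ (r - 1) * (|v x - v y| ^ r + |u x - u y| ^ r) :=
    calc |φ x - φ y| ^ r ≤ (C * (|v x - v y| + |u x - u y|)) ^ r := by gcongr
      _ = C ^ r * (|v x - v y| + |u x - u y|) ^ r := mul_rpow hC (by positivity)
      _ ≤ C ^ r * (2 ^ (r - 1) * (|v x - v y| ^ r + |u x - u y| ^ r)) := by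
          gcongr
          exact_mod_cast NNReal.rpow_add_le_mul_rpow_add_rpow ⟨_, abs_nonneg (v x - v y)⟩
            ⟨_, abs_nonneg (u x - u y)⟩ hr
      _ = _ := by ring
  unfold gIntegrand
  rw [← ENNReal.ofReal_add (by positivity) (by positivity), ← ENNReal.ofReal_mul (by positivity),
    ← add_div, ← mul_div_assoc]
  gcongr

theorem gEnergy_le_of_abs_sub_le (hr : 1 ≤ r) {C : ℝ} (hC : 0 ≤ C) {u v φ : Rd d → ℝ}
    (hu : AEMeasurable u) (hv : AEMeasurable v)
    (h : ∀ x y, |φ x - φ y| ≤ C * (|v x - v y| + |u x - u y|)) :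
    gEnergy d s r φ ≤ ENNReal.ofReal (C ^ r * 2 ^ (r - 1)) *
      (gEnergy d s r v + gEnergy d s r u) := by
  obtain ⟨u', hu'm, huu'⟩ := hu
  obtain ⟨v', hv'm, hvv'⟩ := hv
  rw [gEnergy_congr huu', gEnergy_congr hvv']
  calc gEnergy d s r φ
      ≤ ∫⁻ x, ∫⁻ y, ENNReal.ofReal (C ^ r * 2 ^ (r - 1)) *
          (gIntegrand d s r v' x y + gIntegrand d s r u' x y) := by
        refine lintegral_mono_ae ?_
        filter_upwards [huu', hvv'] with x hux hvx
        refine lintegral_mono_ae ?_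
        filter_upwards [huu', hvv'] with y huy hvy
        have := h x y
        rw [hux, huy, hvx, hvy] at this
        exact gIntegrand_le_of_abs_sub_le hr hC this
    _ = _ := by
        have hv'int := measurable_uncurry_gIntegrand (s := s) (r := r) hv'm
        simp only [lintegral_const_mul' _ _ ENNReal.ofReal_ne_top,
          lintegral_add_left hv'int.of_uncurry_left, lintegral_add_left hv'int.lintegral_prod_right]
        rfl

end GagliardoEnergy

theorem test_function_phi_k_in_space_general
    (d : ℕ) (Ω : Set (Rd d)) (s r₁ r₂ : ℝ)
    (hr₂ : 1 < r₂) (hr : r₂ < r₁)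
    (hΩb : Bornology.IsBounded Ω)
    (u v : Rd d → ℝ) (hu : memW0 d Ω s r₁ u) (hu0 : ∀ x, 0 ≤ u x)
    (hv : memW0 d Ω s r₁ v) (M : ℝ) (hvM : ∀ x, |v x| ≤ M)
    (k : ℕ) (hk : 0 < k) :
    memW0 d Ω s r₁
      (fun x => |v x| ^ r₁ /
        ((u x + 1 / k) ^ (r₁ - 1) + (u x + 1 / k) ^ (r₂ - 1))) ∧
    ∃ C : ℝ, 0 < C ∧ ∀ x y : Rd d,
      |(|v x| ^ r₁ / ((u x + 1 / k) ^ (r₁ - 1) + (u x + 1 / k) ^ (r₂ - 1))) -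
        (|v y| ^ r₁ / ((u y + 1 / k) ^ (r₁ - 1) + (u y + 1 / k) ^ (r₂ - 1)))| ≤
      C * (|v x - v y| + |u x - u y|) := by
  set φ : Rd d → ℝ := fun x =>
    |v x| ^ r₁ / ((u x + 1 / k) ^ (r₁ - 1) + (u x + 1 / k) ^ (r₂ - 1))
  have hr₁ : 1 ≤ r₁ := by linarith
  have hε : (0 : ℝ) < 1 / k := by positivity
  have hM : 0 ≤ M := (abs_nonneg _).trans (hvM 0)
  have huk : ∀ x, 1 / (k : ℝ) ≤ u x + 1 / k := fun x => le_add_of_nonneg_left (hu0 x)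
  obtain ⟨C, hC, hCφ⟩ := exists_abs_rpow_div_rpow_add_rpow_sub_le hr₁ (sub_nonneg.2 hr₁)
    (sub_nonneg.2 hr₂.le) hε hM
  have hφ : ∀ x y, |φ x - φ y| ≤ C * (|v x - v y| + |u x - u y|) := fun x y => by
    simpa only [add_sub_add_right_eq_sub] using
      hCφ (v x) (v y) _ _ (hvM x) (hvM y) (huk x) (huk y)
  have hφ_out : ∀ x ∉ Ω, φ x = 0 := fun x hx => by
    simp [φ, hv.2.2 x hx, zero_rpow (by linarith : r₁ ≠ 0)]
  have hφ_meas : AEMeasurable φ :=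
    (hv.1.1.aemeasurable.abs.pow_const _).div
      (((hu.1.1.aemeasurable.add_const _).pow_const _).add
        ((hu.1.1.aemeasurable.add_const _).pow_const _))
  have hφ_bdd : ∀ x, ‖φ x‖ ≤ M ^ r₁ / ((1 / k) ^ (r₁ - 1) + (1 / k) ^ (r₂ - 1)) := fun x => by
    have := hε.trans_le (huk x)
    rw [Real.norm_of_nonneg (by positivity)]
    dsimp only [φ]
    gcongr
    exacts [hvM x, huk x, huk x]
  refine ⟨⟨?_, ?_, hφ_out⟩, C, hC, hφ⟩
  · exact (memLp_top_of_bound hφ_meas.aestronglyMeasurable _ (ae_of_all _ hφ_bdd)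
      ).mono_exponent_of_measure_support_ne_top hφ_out hΩb.measure_lt_top.ne le_top
  · exact ne_top_of_le_ne_top
      (ENNReal.mul_ne_top ENNReal.ofReal_ne_top (ENNReal.add_ne_top.2 ⟨hv.2.1, hu.2.1⟩))
      (gEnergy_le_of_abs_sub_le hr₁ hC.le hu.1.1.aemeasurable hv.1.1.aemeasurable hφ)

/-- Lemma 2.4 (for `φ_k`): with `u ∈ W₀^{s,r₁}(Ω)` nonnegative,
`v ∈ W₀^{s,r₁}(Ω) ∩ L^∞`, and `u_k = u + 1/k`, the function
`φ_k = |v|^{r₁}/(u_k^{r₁-1} + u_k^{r₂-1})` lies in `W₀^{s,r₁}(Ω)`, and it satisfies a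
pointwise Lipschitz-type bound `|φ_k(x)-φ_k(y)| ≤ C(|v(x)-v(y)| + |u(x)-u(y)|)`. -/
theorem test_function_phi_k_in_space
    (d : ℕ) (Ω : Set (Rd d)) (s r₁ r₂ : ℝ)
    (hs0 : 0 < s) (hs1 : s < 1) (hr₂ : 1 < r₂) (hr : r₂ < r₁)
    (hΩo : IsOpen Ω) (hΩb : Bornology.IsBounded Ω)
    (u v : Rd d → ℝ) (hu : memW0 d Ω s r₁ u) (hu0 : ∀ x, 0 ≤ u x)
    (hv : memW0 d Ω s r₁ v) (M : ℝ) (hvM : ∀ x, |v x| ≤ M)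
    (k : ℕ) (hk : 0 < k) :
    memW0 d Ω s r₁
      (fun x => |v x| ^ r₁ /
        ((u x + 1 / k) ^ (r₁ - 1) + (u x + 1 / k) ^ (r₂ - 1))) ∧
    ∃ C : ℝ, 0 < C ∧ ∀ x y : Rd d,
      |(|v x| ^ r₁ / ((u x + 1 / k) ^ (r₁ - 1) + (u x + 1 / k) ^ (r₂ - 1))) -
        (|v y| ^ r₁ / ((u y + 1 / k) ^ (r₁ - 1) + (u y + 1 / k) ^ (r₂ - 1)))| ≤
      C * (|v x - v y| + |u x - u y|) :=
  test_function_phi_k_in_space_general d Ω s r₁ r₂ hr₂ hr hΩb u v hu hu0 hv M hvM k hk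

end
end

section
/- Let 0 < s < 1, 1 < r₂ < r₁ < ∞, u ∈ W₀^{s,r₁}(Ω) nonnegative, v ∈ W₀^{s,r₁}(Ω) ∩ L^∞(Ω), u_k = u + 1/k. Then ψ_k := |v|^{r₁}/u_k^{r₂-1} and η_k := |v|^{r₁-r₂+1}/u_k^{r₁-r₂} both belong to W₀^{s,r₁}(Ω). -/
open MeasureTheory Real ENNReal

noncomputable section

/-! On the range of `(v, u)`, where `|v| ≤ M` and `u ≥ 0`, the map `(a, b) ↦ |a| ^ p / (b + c) ^ t`
is Lipschitz (`p ≥ 1` keeps `|a| ^ p` Lipschitz on `[-M, M]`, `c > 0` keeps the denominator away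
from `0`). Hence every difference quotient of `|v| ^ p / (u + c) ^ t` is dominated by those of `v`
and `u`, so its Gagliardo energy is finite; being bounded and vanishing outside the bounded set `Ω`,
it is in every `L^r`. Both `ψ_k` and `η_k` are of this form with `c = 1 / k`. -/

theorem Real.add_rpow_le_two_rpow_mul_rpow_add_rpow {p a b : ℝ} (hp : 0 ≤ p) (ha : 0 ≤ a)
    (hb : 0 ≤ b) : (a + b) ^ p ≤ 2 ^ p * (a ^ p + b ^ p) :=
  calc (a + b) ^ p ≤ (2 * max a b) ^ p :=
        Real.rpow_le_rpow (add_nonneg ha hb) (by linarith [le_max_left a b, le_max_right a b]) hp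
    _ = 2 ^ p * max a b ^ p := Real.mul_rpow zero_le_two (le_max_of_le_left ha)
    _ ≤ 2 ^ p * (a ^ p + b ^ p) := by
        gcongr
        rcases max_choice a b with h | h <;> rw [h] <;>
          linarith [Real.rpow_nonneg ha p, Real.rpow_nonneg hb p]

theorem rpow_abs_le_of_abs_le_mul_add_mul {r A B F X Y : ℝ} (hr : 0 ≤ r) (hA : 0 ≤ A)
    (hB : 0 ≤ B) (hX : 0 ≤ X) (hY : 0 ≤ Y) (hF : |F| ≤ A * X + B * Y) :
    |F| ^ r ≤ (2 * A) ^ r * X ^ r + (2 * B) ^ r * Y ^ r :=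
  calc |F| ^ r ≤ (A * X + B * Y) ^ r := Real.rpow_le_rpow (abs_nonneg F) hF hr
    _ ≤ 2 ^ r * ((A * X) ^ r + (B * Y) ^ r) :=
        Real.add_rpow_le_two_rpow_mul_rpow_add_rpow hr (by positivity) (by positivity)
    _ = (2 * A) ^ r * X ^ r + (2 * B) ^ r * Y ^ r := by
        rw [Real.mul_rpow hA hX, Real.mul_rpow hB hY, Real.mul_rpow zero_le_two hA,
          Real.mul_rpow zero_le_two hB]
        ring

theorem abs_rpow_sub_rpow_le_of_le {p M a b : ℝ} (hp : 1 ≤ p) (ha : 0 ≤ a) (hb : 0 ≤ b)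
    (haM : a ≤ M) (hbM : b ≤ M) : |a ^ p - b ^ p| ≤ p * M ^ (p - 1) * |a - b| := by
  have hderiv : ∀ x ∈ Set.Icc 0 M,
      HasDerivWithinAt (fun x : ℝ => x ^ p) (p * x ^ (p - 1)) (Set.Icc 0 M) x := fun _ _ =>
    (Real.hasDerivAt_rpow_const (Or.inr hp)).hasDerivWithinAt
  have hbound : ∀ x ∈ Set.Icc 0 M, ‖p * x ^ (p - 1)‖ ≤ p * M ^ (p - 1) := by
    intro x hx
    rw [Real.norm_of_nonneg (mul_nonneg (by linarith) (Real.rpow_nonneg hx.1 _))]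
    exact mul_le_mul_of_nonneg_left (Real.rpow_le_rpow hx.1 hx.2 (by linarith)) (by linarith)
  simpa only [Real.norm_eq_abs] using
    (convex_Icc 0 M).norm_image_sub_le_of_norm_hasDerivWithin_le hderiv hbound ⟨hb, hbM⟩ ⟨ha, haM⟩

theorem abs_inv_rpow_sub_inv_rpow_le {t c a b : ℝ} (ht : 0 ≤ t) (hc : 0 < c) (ha : c ≤ a)
    (hb : c ≤ b) : |(a ^ t)⁻¹ - (b ^ t)⁻¹| ≤ t / c ^ (t + 1) * |a - b| := by
  have hderiv : ∀ x ∈ Set.Ici c,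
      HasDerivWithinAt (fun x : ℝ => x ^ (-t)) (-t * x ^ (-t - 1)) (Set.Ici c) x := fun x hx =>
    (Real.hasDerivAt_rpow_const (Or.inl (hc.trans_le hx).ne')).hasDerivWithinAt
  have hbound : ∀ x ∈ Set.Ici c, ‖-t * x ^ (-t - 1)‖ ≤ t / c ^ (t + 1) := by
    intro x hx
    have hx0 : 0 < x := hc.trans_le hx
    rw [norm_mul, norm_neg, Real.norm_of_nonneg ht, Real.norm_of_nonneg (Real.rpow_nonneg hx0.le _),
      div_eq_mul_inv, ← Real.rpow_neg hc.le, neg_add', ← neg_sub]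
    exact mul_le_mul_of_nonneg_left (Real.rpow_le_rpow_of_nonpos hc hx (by linarith)) ht
  have h := (convex_Ici c).norm_image_sub_le_of_norm_hasDerivWithin_le hderiv hbound hb ha
  rwa [Real.norm_eq_abs, Real.norm_eq_abs, Real.rpow_neg (hc.le.trans ha),
    Real.rpow_neg (hc.le.trans hb)] at h

theorem abs_rpow_div_add_rpow_sub_le {p t c M a b a' b' : ℝ} (hp : 1 ≤ p) (ht : 0 ≤ t)
    (hc : 0 < c) (haM : |a| ≤ M) (hbM : |b| ≤ M) (ha' : 0 ≤ a') (hb' : 0 ≤ b') :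
    |(|a| ^ p / (a' + c) ^ t - |b| ^ p / (b' + c) ^ t)| ≤
      p * M ^ (p - 1) / c ^ t * |a - b| + M ^ p * (t / c ^ (t + 1)) * |a' - b'| := by
  have hM : 0 ≤ M := (abs_nonneg a).trans haM
  have hct : 0 < c ^ t := Real.rpow_pos_of_pos hc t
  have ha'ct : c ^ t ≤ (a' + c) ^ t := Real.rpow_le_rpow hc.le (by linarith) ht
  have hnum : |(|a| ^ p - |b| ^ p)| ≤ p * M ^ (p - 1) * |a - b| :=
    (abs_rpow_sub_rpow_le_of_le hp (abs_nonneg a) (abs_nonneg b) haM hbM).trans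
      (mul_le_mul_of_nonneg_left (abs_abs_sub_abs_le_abs_sub a b) (by positivity))
  have hden := abs_inv_rpow_sub_inv_rpow_le ht hc (le_add_of_nonneg_left ha')
    (le_add_of_nonneg_left hb')
  rw [add_sub_add_right_eq_sub] at hden
  have hsplit : |a| ^ p / (a' + c) ^ t - |b| ^ p / (b' + c) ^ t =
      (|a| ^ p - |b| ^ p) / (a' + c) ^ t + |b| ^ p * (((a' + c) ^ t)⁻¹ - ((b' + c) ^ t)⁻¹) := by
    ring
  rw [hsplit]
  refine (abs_add_le _ _).trans (add_le_add ?_ ?_)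
  · rw [abs_div, abs_of_pos (hct.trans_le ha'ct)]
    calc |(|a| ^ p - |b| ^ p)| / (a' + c) ^ t ≤ p * M ^ (p - 1) * |a - b| / c ^ t :=
          div_le_div₀ (by positivity) hnum hct ha'ct
      _ = p * M ^ (p - 1) / c ^ t * |a - b| := by ring
  · rw [abs_mul, abs_of_nonneg (Real.rpow_nonneg (abs_nonneg b) p), mul_assoc (M ^ p)]
    exact mul_le_mul (Real.rpow_le_rpow (abs_nonneg b) hbM (by linarith)) hden (abs_nonneg _)
      (by positivity)

theorem memLp_of_abs_le_of_eq_zero_of_notMem {α : Type*} [MeasurableSpace α] {μ : Measure α}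
    {p : ℝ≥0∞} {S : Set α} {f : α → ℝ} {C : ℝ} (hS : μ S ≠ ∞) (hf : AEStronglyMeasurable f μ)
    (hfC : ∀ x, |f x| ≤ C) (hf0 : ∀ x ∉ S, f x = 0) : MemLp f p μ := by
  refine (memLp_indicator_const p (measurableSet_toMeasurable μ S) C
    (Or.inr (by rwa [measure_toMeasurable]))).of_le hf (ae_of_all _ fun x => ?_)
  by_cases hx : x ∈ toMeasurable μ S
  · rw [Set.indicator_of_mem hx, Real.norm_eq_abs, Real.norm_eq_abs,
      abs_of_nonneg ((abs_nonneg _).trans (hfC x))]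
    exact hfC x
  · rw [hf0 x fun hxS => hx (subset_toMeasurable μ S hxS), norm_zero]
    exact norm_nonneg _

theorem gEnergy_le_of_abs_sub_le_s13 {d : ℕ} {s r A B : ℝ} {f g h : Rd d → ℝ} (hr : 0 ≤ r)
    (hA : 0 ≤ A) (hB : 0 ≤ B) (hg : AEMeasurable g)
    (hfgh : ∀ x y, |f x - f y| ≤ A * |g x - g y| + B * |h x - h y|) :
    gEnergy d s r f ≤
      ENNReal.ofReal ((2 * A) ^ r) * gEnergy d s r g +
        ENNReal.ofReal ((2 * B) ^ r) * gEnergy d s r h := by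
  set E : ℝ := d + s * r
  set G : Rd d → Rd d → ℝ≥0∞ := fun x y => ENNReal.ofReal (|g x - g y| ^ r / ‖x - y‖ ^ E)
  have hintegrand : ∀ x y, ENNReal.ofReal (|f x - f y| ^ r / ‖x - y‖ ^ E) ≤
      ENNReal.ofReal ((2 * A) ^ r) * G x y +
        ENNReal.ofReal ((2 * B) ^ r) * ENNReal.ofReal (|h x - h y| ^ r / ‖x - y‖ ^ E) := by
    intro x y
    rw [← ENNReal.ofReal_mul (by positivity), ← ENNReal.ofReal_mul (by positivity)]
    refine (ENNReal.ofReal_le_ofReal ?_).trans ENNReal.ofReal_add_le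
    rw [← mul_div_assoc, ← mul_div_assoc, ← add_div]
    exact div_le_div_of_nonneg_right
      (rpow_abs_le_of_abs_le_mul_add_mul hr hA hB (abs_nonneg _) (abs_nonneg _) (hfgh x y))
      (by positivity)
  have hG : AEMeasurable (Function.uncurry G) (volume.prod volume) := by
    have h₁ : AEMeasurable (fun z : Rd d × Rd d => g z.1) (volume.prod volume) := hg.comp_fst
    have h₂ : AEMeasurable (fun z : Rd d × Rd d => g z.2) (volume.prod volume) := hg.comp_snd
    unfold G Function.uncurry
    fun_prop
  calc gEnergy d s r f
      ≤ ∫⁻ x, ∫⁻ y, ENNReal.ofReal ((2 * A) ^ r) * G x y +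
          ENNReal.ofReal ((2 * B) ^ r) * ENNReal.ofReal (|h x - h y| ^ r / ‖x - y‖ ^ E) :=
        lintegral_mono fun x => lintegral_mono fun y => hintegrand x y
    _ = ENNReal.ofReal ((2 * A) ^ r) * gEnergy d s r g +
          ENNReal.ofReal ((2 * B) ^ r) * gEnergy d s r h := by
        have hGx : ∀ x, AEMeasurable (G x) := fun x => by unfold G; fun_prop
        simp_rw [lintegral_add_left' ((hGx _).const_mul _),
          lintegral_const_mul' _ _ ENNReal.ofReal_ne_top]
        rw [lintegral_add_left' (hG.lintegral_prod_right.const_mul _),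
          lintegral_const_mul' _ _ ENNReal.ofReal_ne_top,
          lintegral_const_mul' _ _ ENNReal.ofReal_ne_top]
        rfl

theorem memW0_abs_rpow_div_add_rpow {d : ℕ} {Ω : Set (Rd d)} {s r p t c M : ℝ}
    {u v : Rd d → ℝ} (hr : 0 ≤ r) (hΩ : Bornology.IsBounded Ω) (hu : memW0 d Ω s r u)
    (hu0 : ∀ x, 0 ≤ u x) (hv : memW0 d Ω s r v) (hvM : ∀ x, |v x| ≤ M) (hp : 1 ≤ p)
    (ht : 0 ≤ t) (hc : 0 < c) :
    memW0 d Ω s r (fun x => |v x| ^ p / (u x + c) ^ t) := by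
  have hM : 0 ≤ M := (abs_nonneg _).trans (hvM 0)
  have hvanish : ∀ x ∉ Ω, |v x| ^ p / (u x + c) ^ t = 0 := fun x hx => by
    rw [hv.2.2 x hx, abs_zero, Real.zero_rpow (by linarith), zero_div]
  have hbound : ∀ x, |(|v x| ^ p / (u x + c) ^ t)| ≤ M ^ p / c ^ t := fun x => by
    have hux : c ≤ u x + c := le_add_of_nonneg_left (hu0 x)
    rw [abs_of_nonneg (div_nonneg (by positivity) (Real.rpow_nonneg (hc.le.trans hux) t))]
    exact div_le_div₀ (by positivity) (Real.rpow_le_rpow (abs_nonneg _) (hvM x) (by linarith))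
      (by positivity) (Real.rpow_le_rpow hc.le hux ht)
  have hmeas : AEStronglyMeasurable (fun x => |v x| ^ p / (u x + c) ^ t) volume := by
    have hu_meas := hu.1.1.aemeasurable
    have hv_meas := hv.1.1.aemeasurable
    exact AEMeasurable.aestronglyMeasurable (by fun_prop)
  have henergy := gEnergy_le_of_abs_sub_le_s13 (s := s) hr (by positivity) (by positivity)
    hv.1.1.aemeasurable fun x y =>
      abs_rpow_div_add_rpow_sub_le hp ht hc (hvM x) (hvM y) (hu0 x) (hu0 y)
  refine ⟨memLp_of_abs_le_of_eq_zero_of_notMem hΩ.measure_lt_top.ne hmeas hbound hvanish,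
    ne_top_of_le_ne_top ?_ henergy, hvanish⟩
  exact ENNReal.add_ne_top.mpr ⟨ENNReal.mul_ne_top ENNReal.ofReal_ne_top hv.2.1,
    ENNReal.mul_ne_top ENNReal.ofReal_ne_top hu.2.1⟩

theorem test_functions_psi_eta_in_space_general
    (d : ℕ) (Ω : Set (Rd d)) (s r₁ r₂ : ℝ)
    (hr₂ : 1 < r₂) (hr : r₂ < r₁)
    (hΩb : Bornology.IsBounded Ω)
    (u v : Rd d → ℝ) (hu : memW0 d Ω s r₁ u) (hu0 : ∀ x, 0 ≤ u x)
    (hv : memW0 d Ω s r₁ v) (M : ℝ) (hvM : ∀ x, |v x| ≤ M)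
    (k : ℕ) (hk : 0 < k) :
    memW0 d Ω s r₁ (fun x => |v x| ^ r₁ / (u x + 1 / k) ^ (r₂ - 1)) ∧
    memW0 d Ω s r₁ (fun x => |v x| ^ (r₁ - r₂ + 1) / (u x + 1 / k) ^ (r₁ - r₂)) := by
  have hc : (0 : ℝ) < 1 / k := by positivity
  have hr₁ : 0 ≤ r₁ := by linarith
  exact ⟨memW0_abs_rpow_div_add_rpow hr₁ hΩb hu hu0 hv hvM (by linarith) (by linarith) hc,
    memW0_abs_rpow_div_add_rpow hr₁ hΩb hu hu0 hv hvM (by linarith) (by linarith) hc⟩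

/-- Lemma 2.4 (for `ψ_k` and `η_k`): with `u ∈ W₀^{s,r₁}(Ω)` nonnegative,
`v ∈ W₀^{s,r₁}(Ω) ∩ L^∞`, and `u_k = u + 1/k`, the functions
`ψ_k = |v|^{r₁}/u_k^{r₂-1}` and `η_k = |v|^{r₁-r₂+1}/u_k^{r₁-r₂}` lie in
`W₀^{s,r₁}(Ω)`. -/
theorem test_functions_psi_eta_in_space
    (d : ℕ) (Ω : Set (Rd d)) (s r₁ r₂ : ℝ)
    (hs0 : 0 < s) (hs1 : s < 1) (hr₂ : 1 < r₂) (hr : r₂ < r₁)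
    (hΩo : IsOpen Ω) (hΩb : Bornology.IsBounded Ω)
    (u v : Rd d → ℝ) (hu : memW0 d Ω s r₁ u) (hu0 : ∀ x, 0 ≤ u x)
    (hv : memW0 d Ω s r₁ v) (M : ℝ) (hvM : ∀ x, |v x| ≤ M)
    (k : ℕ) (hk : 0 < k) :
    memW0 d Ω s r₁ (fun x => |v x| ^ r₁ / (u x + 1 / k) ^ (r₂ - 1)) ∧
    memW0 d Ω s r₁ (fun x => |v x| ^ (r₁ - r₂ + 1) / (u x + 1 / k) ^ (r₁ - r₂)) :=
  test_functions_psi_eta_in_space_general d Ω s r₁ r₂ hr₂ hr hΩb u v hu hu0 hv M hvM k hk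

end
end

section
/- Let 0 < s₂ < s₁ < 1 < q < p < ∞, α < λ¹_{s₁,p} and β > 0. Then the functional I₊(u) = [u]_{s₁,p}^p/p + [u]_{s₂,q}^q/q - α‖u⁺‖_p^p/p - β‖u⁺‖_q^q/q is coercive on W₀^{s₁,p}(Ω): there exist constants c₁ > 0 and c₂ ≥ 0 such that I₊(u) ≥ c₁[u]_{s₁,p}^p - c₂ for all u ∈ W₀^{s₁,p}(Ω). In particular I₊ is bounded below. -/
open MeasureTheory Real ENNReal

noncomputable section

/-!
The positive-part terms are dominated by the full `L^p` and `L^q` integrals. Writing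
`α = a λ¹` with `a < 1` (or `a = 0` if `α ≤ 0`), the Poincaré inequality
`λ¹ ‖u‖_p^p ≤ [u]_{s₁,p}^p`, which is the definition of `λ¹` applied to `u / ‖u‖_p`, absorbs the
`α` term into `(1 - a)/p · [u]^p`. The embedding bounds the `β` term by `β C^q [u]^q / q`, and
since `q < p` a Young-type inequality `t^q ≤ ε t^p + K_ε` absorbs half of the remaining
coefficient, leaving `I₊(u) ≥ (1 - a)/(2p) · [u]^p - const`.
-/

lemma gSemi_nonneg (d : ℕ) (s r : ℝ) (u : Rd d → ℝ) : 0 ≤ gSemi d s r u :=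
  rpow_nonneg toReal_nonneg _

lemma gSemi_rpow (d : ℕ) (s : ℝ) {r : ℝ} (hr : 0 < r) (u : Rd d → ℝ) :
    gSemi d s r u ^ r = (gEnergy d s r u).toReal := by
  rw [gSemi, one_div, rpow_inv_rpow toReal_nonneg hr.ne']

lemma gEnergy_const_mul (d : ℕ) (s r c : ℝ) (u : Rd d → ℝ) :
    gEnergy d s r (fun x => c * u x) = ENNReal.ofReal (|c| ^ r) * gEnergy d s r u := by
  have hpt : ∀ x y : Rd d,
      ENNReal.ofReal (|c * u x - c * u y| ^ r / ‖x - y‖ ^ ((d : ℝ) + s * r)) =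
        ENNReal.ofReal (|c| ^ r) *
          ENNReal.ofReal (|u x - u y| ^ r / ‖x - y‖ ^ ((d : ℝ) + s * r)) := by
    intro x y
    rw [← ENNReal.ofReal_mul (by positivity), ← mul_div_assoc,
      ← mul_rpow (abs_nonneg _) (abs_nonneg _), ← abs_mul, mul_sub]
  simp only [gEnergy, hpt]
  rw [← lintegral_const_mul' _ _ ofReal_ne_top]
  exact lintegral_congr fun x => lintegral_const_mul' _ _ ofReal_ne_top

lemma gSemi_rpow_const_mul (d : ℕ) (s : ℝ) {r : ℝ} (hr : 0 < r) (c : ℝ) (u : Rd d → ℝ) :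
    gSemi d s r (fun x => c * u x) ^ r = |c| ^ r * gSemi d s r u ^ r := by
  rw [gSemi_rpow d s hr, gSemi_rpow d s hr, gEnergy_const_mul, toReal_mul,
    toReal_ofReal (by positivity)]

lemma memW0.const_mul {d : ℕ} {Ω : Set (Rd d)} {s r : ℝ} {u : Rd d → ℝ}
    (hu : memW0 d Ω s r u) (c : ℝ) : memW0 d Ω s r (fun x => c * u x) := by
  obtain ⟨hLp, hE, hΩ⟩ := hu
  refine ⟨hLp.const_mul c, ?_, fun x hx => by simp [hΩ x hx]⟩
  rw [gEnergy_const_mul]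
  exact mul_ne_top ofReal_ne_top hE

lemma MeasureTheory.MemLp.integrable_abs_rpow {α : Type*} [MeasurableSpace α] {μ : Measure α}
    {u : α → ℝ} {r : ℝ} (hu : MemLp u (ENNReal.ofReal r) μ) (hr : 0 < r) :
    Integrable (fun x => |u x| ^ r) μ := by
  simpa [toReal_ofReal hr.le] using
    hu.integrable_norm_rpow (ofReal_pos.mpr hr).ne' ofReal_ne_top

lemma lam1_mul_integral_le (d : ℕ) (Ω : Set (Rd d)) (s : ℝ) {r : ℝ} (hr : 0 < r)
    {u : Rd d → ℝ} (hu : memW0 d Ω s r u) :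
    lam1 d Ω s r * ∫ x in Ω, |u x| ^ r ≤ gSemi d s r u ^ r := by
  set T := ∫ x in Ω, |u x| ^ r
  have hT0 : 0 ≤ T := integral_nonneg fun x => rpow_nonneg (abs_nonneg (u x)) r
  rcases hT0.eq_or_lt with hT | hT
  · rw [← hT, mul_zero]
    exact rpow_nonneg (gSemi_nonneg _ _ _ _) _
  set c := T ^ (-r⁻¹)
  have hc : 0 < c := rpow_pos_of_pos hT _
  have hcr : |c| ^ r = T⁻¹ := by
    rw [abs_of_pos hc, ← rpow_mul hT.le, neg_mul, inv_mul_cancel₀ hr.ne', Real.rpow_neg_one]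
  have hnormalized : ∫ x in Ω, |c * u x| ^ r = 1 := by
    simp only [abs_mul, mul_rpow (abs_nonneg c) (abs_nonneg _)]
    rw [integral_const_mul, hcr, inv_mul_cancel₀ hT.ne']
  have hbdd : BddBelow {t : ℝ | ∃ w : Rd d → ℝ, memW0 d Ω s r w ∧
      (∫ x in Ω, |w x| ^ r) = 1 ∧ t = gSemi d s r w ^ r} := by
    refine ⟨0, ?_⟩
    rintro t ⟨w, -, -, rfl⟩
    exact rpow_nonneg (gSemi_nonneg _ _ _ _) _
  have hle : lam1 d Ω s r ≤ T⁻¹ * gSemi d s r u ^ r := by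
    rw [← hcr, ← gSemi_rpow_const_mul d s hr]
    exact csInf_le hbdd ⟨_, hu.const_mul c, hnormalized, rfl⟩
  calc lam1 d Ω s r * T ≤ T⁻¹ * gSemi d s r u ^ r * T := mul_le_mul_of_nonneg_right hle hT.le
    _ = gSemi d s r u ^ r := by rw [mul_right_comm, inv_mul_cancel₀ hT.ne', one_mul]

lemma setIntegral_posPart_rpow_le {d : ℕ} {Ω : Set (Rd d)} {r : ℝ} (hr : 0 ≤ r)
    {u : Rd d → ℝ} (hint : IntegrableOn (fun x => |u x| ^ r) Ω) :
    ∫ x in Ω, max (u x) 0 ^ r ≤ ∫ x in Ω, |u x| ^ r :=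
  integral_mono_of_nonneg (.of_forall fun _ => rpow_nonneg (le_max_right _ _) _) hint
    (.of_forall fun _ => rpow_le_rpow (le_max_right _ _)
      (max_le (le_abs_self _) (abs_nonneg _)) hr)

lemma exists_lt_one_mul_setIntegral_posPart_le (d : ℕ) (Ω : Set (Rd d)) (s : ℝ) {p α : ℝ}
    (hp : 0 < p) (hα : α < lam1 d Ω s p) :
    ∃ a < 1, ∀ u : Rd d → ℝ, memW0 d Ω s p u →
      α * ∫ x in Ω, max (u x) 0 ^ p ≤ a * gSemi d s p u ^ p := by
  rcases le_or_gt α 0 with hα0 | hα0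
  · refine ⟨0, one_pos, fun u _ => ?_⟩
    rw [zero_mul]
    exact mul_nonpos_of_nonpos_of_nonneg hα0
      (integral_nonneg fun x => rpow_nonneg (le_max_right _ _) _)
  have hlam : 0 < lam1 d Ω s p := hα0.trans hα
  refine ⟨α / lam1 d Ω s p, (div_lt_one hlam).mpr hα, fun u hu => ?_⟩
  calc α * ∫ x in Ω, max (u x) 0 ^ p ≤ α * ∫ x in Ω, |u x| ^ p :=
        mul_le_mul_of_nonneg_left
          (setIntegral_posPart_rpow_le hp.le ((hu.1.restrict Ω).integrable_abs_rpow hp)) hα0.le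
    _ = α / lam1 d Ω s p * (lam1 d Ω s p * ∫ x in Ω, |u x| ^ p) := by field_simp
    _ ≤ α / lam1 d Ω s p * gSemi d s p u ^ p :=
        mul_le_mul_of_nonneg_left (lam1_mul_integral_le d Ω s hp hu) (by positivity)

lemma setIntegral_posPart_rpow_le_of_norm_le {d : ℕ} {Ω : Set (Rd d)} {q C S : ℝ} (hq : 0 < q)
    (hC : 0 ≤ C) (hS : 0 ≤ S) {u : Rd d → ℝ} (hint : IntegrableOn (fun x => |u x| ^ q) Ω)
    (hnorm : (∫ x in Ω, |u x| ^ q) ^ (1 / q) ≤ C * S) :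
    ∫ x in Ω, max (u x) 0 ^ q ≤ C ^ q * S ^ q := by
  have hI : 0 ≤ ∫ x in Ω, |u x| ^ q := integral_nonneg fun x => rpow_nonneg (abs_nonneg _) _
  calc ∫ x in Ω, max (u x) 0 ^ q ≤ ∫ x in Ω, |u x| ^ q := setIntegral_posPart_rpow_le hq.le hint
    _ = ((∫ x in Ω, |u x| ^ q) ^ (1 / q)) ^ q := by rw [one_div, rpow_inv_rpow hI hq.ne']
    _ ≤ (C * S) ^ q := rpow_le_rpow (rpow_nonneg hI _) hnorm hq.le
    _ = C ^ q * S ^ q := mul_rpow hC hS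

lemma exists_rpow_le_mul_rpow_add {p q ε : ℝ} (hq : 0 ≤ q) (hpq : q < p) (hε : 0 < ε) :
    ∃ K, 0 ≤ K ∧ ∀ t, 0 ≤ t → t ^ q ≤ ε * t ^ p + K := by
  -- the threshold where `ε t^(p-q) = 1`
  set M := ε⁻¹ ^ (p - q)⁻¹
  have hM : 0 < M := by positivity
  refine ⟨M ^ q, by positivity, fun t ht => ?_⟩
  rcases le_or_gt t M with htM | hMt
  · linarith [rpow_le_rpow ht htM hq, mul_nonneg hε.le (rpow_nonneg ht p)]
  have hgap : ε⁻¹ ≤ t ^ (p - q) := by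
    rw [← rpow_inv_rpow (inv_pos.mpr hε).le (sub_pos.mpr hpq).ne']
    exact rpow_le_rpow hM.le hMt.le (sub_pos.mpr hpq).le
  have htp : t ^ p = t ^ (p - q) * t ^ q := by
    rw [← rpow_add (hM.trans hMt)]; ring_nf
  have : t ^ q ≤ ε * t ^ p := by
    rw [htp, ← mul_assoc]
    refine le_mul_of_one_le_left (rpow_nonneg ht _) ?_
    rwa [← inv_le_iff_one_le_mul₀' hε]
  linarith [rpow_nonneg hM.le q]

lemma exists_mul_setIntegral_posPart_rpow_le (d : ℕ) (Ω : Set (Rd d)) (s : ℝ)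
    {p q β C ε : ℝ} (hΩ : volume Ω ≠ ∞) (hq : 0 < q) (hpq : q < p) (hβ : 0 < β) (hC : 0 < C)
    (hε : 0 < ε) (hemb : ∀ u : Rd d → ℝ, memW0 d Ω s p u →
      (∫ x in Ω, |u x| ^ q) ^ (1 / q) ≤ C * gSemi d s p u) :
    ∃ K, 0 ≤ K ∧ ∀ u : Rd d → ℝ, memW0 d Ω s p u →
      β * ∫ x in Ω, max (u x) 0 ^ q ≤ ε * gSemi d s p u ^ p + K := by
  have := isFiniteMeasure_restrict.mpr hΩ
  set B := β * C ^ q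
  have hB : 0 < B := by positivity
  obtain ⟨K, hK, hyoung⟩ := exists_rpow_le_mul_rpow_add hq.le hpq (div_pos hε hB)
  refine ⟨B * K, by positivity, fun u hu => ?_⟩
  set S := gSemi d s p u
  have hS : 0 ≤ S := gSemi_nonneg _ _ _ _
  have hint := ((hu.1.restrict Ω).mono_exponent (ofReal_le_ofReal hpq.le)).integrable_abs_rpow hq
  calc β * ∫ x in Ω, max (u x) 0 ^ q ≤ β * (C ^ q * S ^ q) :=
        mul_le_mul_of_nonneg_left
          (setIntegral_posPart_rpow_le_of_norm_le hq hC.le hS hint (hemb u hu)) hβ.le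
    _ = B * S ^ q := by ring
    _ ≤ B * (ε / B * S ^ p + K) := mul_le_mul_of_nonneg_left (hyoung S hS) hB.le
    _ = ε * S ^ p + B * K := by field_simp

theorem Iplus_coercive_general
    (d : ℕ) (Ω : Set (Rd d)) (s₁ s₂ p q α β : ℝ)
    (hq : 1 < q) (hpq : q < p)
    (hΩb : Bornology.IsBounded Ω)
    (hα : α < lam1 d Ω s₁ p) (hβ : 0 < β)
    -- continuity of the embedding W₀^{s₁,p}(Ω) ↪ L^q(Ω)
    (hemb : ∃ C : ℝ, 0 < C ∧ ∀ u : Rd d → ℝ, memW0 d Ω s₁ p u →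
      (∫ x in Ω, |u x| ^ q) ^ (1 / q) ≤ C * gSemi d s₁ p u) :
    ∃ c₁ : ℝ, 0 < c₁ ∧ ∃ c₂ : ℝ, 0 ≤ c₂ ∧ ∀ u : Rd d → ℝ, memW0 d Ω s₁ p u →
      c₁ * gSemi d s₁ p u ^ p - c₂ ≤ Iplus d Ω s₁ s₂ p q α β u := by
  obtain ⟨C, hC, hCemb⟩ := hemb
  have hq0 : 0 < q := one_pos.trans hq
  have hp0 : 0 < p := hq0.trans hpq
  obtain ⟨a, ha1, hαterm⟩ := exists_lt_one_mul_setIntegral_posPart_le d Ω s₁ hp0 hα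
  set c₁ := (1 - a) / (2 * p)
  have hc₁ : 0 < c₁ := div_pos (by linarith) (by linarith)
  obtain ⟨K, hK, hβterm⟩ := exists_mul_setIntegral_posPart_rpow_le d Ω s₁ hΩb.measure_lt_top.ne
    hq0 hpq hβ hC (mul_pos hq0 hc₁) hCemb
  refine ⟨c₁, hc₁, K / q, by positivity, fun u hu => ?_⟩
  set S := gSemi d s₁ p u
  have hαp := div_le_div_of_nonneg_right (hαterm u hu) hp0.le
  have hβq := div_le_div_of_nonneg_right (hβterm u hu) hq0.le
  have hc₁S : S ^ p / p - a * S ^ p / p = 2 * (c₁ * S ^ p) := by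
    simp only [c₁]; field_simp
  have hqc₁S : (q * c₁ * S ^ p + K) / q = c₁ * S ^ p + K / q := by field_simp
  have hsemi₂ : 0 ≤ gSemi d s₂ q u ^ q / q :=
    div_nonneg (rpow_nonneg (gSemi_nonneg _ _ _ _) _) hq0.le
  rw [Iplus]
  linarith

/-- Proposition 5.2 (coercivity): for `α < λ¹_{s₁,p}` and `β > 0`, the functional `I₊`
is coercive on `W₀^{s₁,p}(Ω)`: there are `c₁ > 0`, `c₂ ≥ 0` with
`I₊(u) ≥ c₁ [u]_{s₁,p}^p - c₂` for all `u ∈ W₀^{s₁,p}(Ω)`; in particular `I₊` is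
bounded below. -/
theorem Iplus_coercive
    (d : ℕ) (Ω : Set (Rd d)) (s₁ s₂ p q α β : ℝ)
    (hs₂ : 0 < s₂) (hs : s₂ < s₁) (hs₁ : s₁ < 1) (hq : 1 < q) (hpq : q < p)
    (hΩo : IsOpen Ω) (hΩb : Bornology.IsBounded Ω)
    (hα : α < lam1 d Ω s₁ p) (hβ : 0 < β)
    -- continuity of the embedding W₀^{s₁,p}(Ω) ↪ L^q(Ω)
    (hemb : ∃ C : ℝ, 0 < C ∧ ∀ u : Rd d → ℝ, memW0 d Ω s₁ p u →
      (∫ x in Ω, |u x| ^ q) ^ (1 / q) ≤ C * gSemi d s₁ p u) :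
    ∃ c₁ : ℝ, 0 < c₁ ∧ ∃ c₂ : ℝ, 0 ≤ c₂ ∧ ∀ u : Rd d → ℝ, memW0 d Ω s₁ p u →
      c₁ * gSemi d s₁ p u ^ p - c₂ ≤ Iplus d Ω s₁ s₂ p q α β u :=
  Iplus_coercive_general d Ω s₁ s₂ p q α β hq hpq hΩb hα hβ hemb

end
end
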